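/- Let q ≥ 2 and let μ_q := {ζ ∈ ℂ : ζ^q = 1}. Consider the following family of polynomials in ℂ[x,y,z]: the coordinates x and z, together with xz − ξ for ξ ∈ μ_q, z − ζ for ζ ∈ μ_q, and y − θx for θ ∈ μ_q. Then for every point p = (p_1,p_2,p_3) ∈ ℂ^3 such that not both p_1 = 0 and p_2 = 0, the gradients at p of those members of the family that vanish at p form a linearly independent family of vectors in ℂ^3. -/

import Mathlib

open MvPolynomial

/-- The family of polynomials `x, z, xz − ξ (ξ^q = 1), z − ζ (ζ^q = 1), y − θx (θ^q = 1)`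
in `ℂ[x,y,z]`: the irreducible factors of the local equations of the divisor `X̃` in the
second chart of the second blow-up in the variant of Hironaka's example. -/
noncomputable def hironakaChart2Family (q : ℕ) :
    Fin 2 ⊕ Fin 3 × {ζ : ℂ // ζ ^ q = 1} → MvPolynomial (Fin 3) ℂ :=
  fun i => match i with
  | .inl j => if j = 0 then X 0 else X 2
  | .inr (j, ζ) =>
      if j = 0 then X 0 * X 2 - C ζ.1
      else if j = 1 then X 2 - C ζ.1
      else X 1 - C ζ.1 * X 0

/-! At a point `p` off `{x = y = 0}` at most one member of each of the groups `{x, xz − ξ}`,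
`{y − θx}` and `{z, z − ζ}` vanishes: `x` and `xz − ξ` cannot vanish together because `ξ ≠ 0`,
and the value of `xz`, of `y / x` (where `x ≠ 0`) or of `z` determines the root of unity.
The gradients of the vanishing members are therefore distinct rows of a matrix
`(a, 0, b), (c, 1, 0), (0, 0, 1)` with `a ≠ 0`, whose determinant is `a`. -/

theorem linearIndependent_frame_of_ne_zero {R : Type*} [CommRing R] [IsDomain R] {a b c : R}
    (ha : a ≠ 0) : LinearIndependent R ![![a, 0, b], ![c, 1, 0], ![0, 0, 1]] :=
  Matrix.linearIndependent_rows_of_det_ne_zero (A := !![a, 0, b; c, 1, 0; 0, 0, 1])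
    (by simpa [Matrix.det_fin_three] using ha)

theorem ne_zero_of_eq_mul {M₀ : Type*} [MulZeroClass M₀] {x y θ : M₀}
    (hxy : ¬ (x = 0 ∧ y = 0)) (h : y = θ * x) : x ≠ 0 :=
  fun hx => hxy ⟨hx, by rw [h, hx, mul_zero]⟩

section

variable {q : ℕ} {p : Fin 3 → ℂ}

theorem coe_ne_zero_of_pow_eq_one (hq : q ≠ 0) (ζ : {ζ : ℂ // ζ ^ q = 1}) : (ζ : ℂ) ≠ 0 :=
  (IsUnit.of_pow_eq_one ζ.2 hq).ne_zero

@[simp] lemma hironakaChart2Family_inl_zero : hironakaChart2Family q (.inl 0) = X 0 := rfl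

@[simp] lemma hironakaChart2Family_inl_one : hironakaChart2Family q (.inl 1) = X 2 := rfl

@[simp] lemma hironakaChart2Family_inr_zero (ξ : {ζ : ℂ // ζ ^ q = 1}) :
    hironakaChart2Family q (.inr (0, ξ)) = X 0 * X 2 - C ξ.1 := rfl

@[simp] lemma hironakaChart2Family_inr_one (ζ : {ζ : ℂ // ζ ^ q = 1}) :
    hironakaChart2Family q (.inr (1, ζ)) = X 2 - C ζ.1 := rfl

@[simp] lemma hironakaChart2Family_inr_two (θ : {ζ : ℂ // ζ ^ q = 1}) :
    hironakaChart2Family q (.inr (2, θ)) = X 1 - C θ.1 * X 0 := rfl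

/-- The labels `0`, `1`, `2` stand for the groups `{x, xz − ξ}`, `{y − θx}`, `{z, z − ζ}`. -/
def hironakaChart2Group : Fin 2 ⊕ Fin 3 × {ζ : ℂ // ζ ^ q = 1} → Fin 3
  | .inl 0 => 0
  | .inl 1 => 2
  | .inr (0, _) => 0
  | .inr (1, _) => 2
  | .inr (2, _) => 1

/-- Row `k` is the gradient at `p` of the member of group `k` vanishing at `p`, if there is one. -/
noncomputable def hironakaChart2Frame (p : Fin 3 → ℂ) : Fin 3 → Fin 3 → ℂ :=
  ![![if p 0 * p 2 = 0 then 1 else p 2, 0, if p 0 * p 2 = 0 then 0 else p 0],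
    ![-(p 1 / p 0), 1, 0],
    ![0, 0, 1]]

theorem linearIndependent_hironakaChart2Frame (p : Fin 3 → ℂ) :
    LinearIndependent ℂ (hironakaChart2Frame p) :=
  linearIndependent_frame_of_ne_zero (by split_ifs with h <;> simp_all)

theorem gradient_eq_hironakaChart2Frame (hq : q ≠ 0) (hp : ¬ (p 0 = 0 ∧ p 1 = 0))
    {i : Fin 2 ⊕ Fin 3 × {ζ : ℂ // ζ ^ q = 1}} (hi : eval p (hironakaChart2Family q i) = 0) :
    (fun j => eval p (pderiv j (hironakaChart2Family q i))) =
      hironakaChart2Frame p (hironakaChart2Group i) := by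
  rcases i with j | ⟨j, ζ⟩ <;> fin_cases j <;>
    simp only [Fin.zero_eta, Fin.mk_one, Fin.reduceFinMk, hironakaChart2Family_inl_zero,
      hironakaChart2Family_inl_one, hironakaChart2Family_inr_zero, hironakaChart2Family_inr_one,
      hironakaChart2Family_inr_two, map_sub, map_mul, eval_X, eval_C, sub_eq_zero] at hi ⊢ <;>
    funext k <;> fin_cases k <;>
    simp [hironakaChart2Frame, hironakaChart2Group, hi, coe_ne_zero_of_pow_eq_one hq]
  -- the member `y − θx`, where `θ = y / x` because `x ≠ 0`
  exact (mul_div_cancel_right₀ _ (ne_zero_of_eq_mul hp hi)).symm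

theorem hironakaChart2Group_injective (hq : q ≠ 0) (hp : ¬ (p 0 = 0 ∧ p 1 = 0)) :
    Function.Injective fun s : {i : Fin 2 ⊕ Fin 3 × {ζ : ℂ // ζ ^ q = 1} //
      eval p (hironakaChart2Family q i) = 0} => hironakaChart2Group s.1 := by
  rintro ⟨i, hi⟩ ⟨i', hi'⟩ (h : hironakaChart2Group i = hironakaChart2Group i')
  rcases i with j | ⟨j, ζ⟩ <;> rcases i' with j' | ⟨j', ζ'⟩ <;> fin_cases j <;> fin_cases j' <;>
    simp only [hironakaChart2Group, Fin.zero_eta, Fin.mk_one, Fin.reduceFinMk,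
      hironakaChart2Family_inl_zero, hironakaChart2Family_inl_one, hironakaChart2Family_inr_zero,
      hironakaChart2Family_inr_one, hironakaChart2Family_inr_two, map_sub, map_mul, eval_X, eval_C,
      sub_eq_zero] at h hi hi' ⊢ <;>
    grind [coe_ne_zero_of_pow_eq_one hq]

end

/-- At every point `p ∈ ℂ^3` with not both `p_1 = 0` and `p_2 = 0` (i.e. outside the
curve `B_i = {x = y = 0}`), the gradients of those members of the family
`x, z, xz − ξ, z − ζ, y − θx` (with `ξ, ζ, θ` ranging over the `q`-th roots of unity)
that vanish at `p` are linearly independent over `ℂ`: the divisor `X̃` has normal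
crossings in this chart outside `B_i`. -/
theorem hironaka_chart2_normal_crossings (q : ℕ) (hq : 2 ≤ q) (p : Fin 3 → ℂ)
    (hp : ¬ (p 0 = 0 ∧ p 1 = 0)) :
    LinearIndependent ℂ
      (fun s : {i : Fin 2 ⊕ Fin 3 × {ζ : ℂ // ζ ^ q = 1} //
          eval p (hironakaChart2Family q i) = 0} =>
        fun j : Fin 3 => eval p (pderiv j (hironakaChart2Family q s.1))) := by
  have hq0 : q ≠ 0 := by omega
  convert (linearIndependent_hironakaChart2Frame p).comp _ (hironakaChart2Group_injective hq0 hp)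
    using 1
  exact funext fun s => gradient_eq_hironakaChart2Frame hq0 hp s.2
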